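/- There exist real numbers λ₁,λ₂,λ₃ such that the 9×9 matrix I₃ ⊗ I₃ + (3/2)·(λ₁²·J₁⊗J₁ − λ₂²·J₂⊗J₂ + λ₃²·J₃⊗J₃) is positive semidefinite (so Φ∘Φ is completely positive), yet there exists a linear map L on matrices indexed by Fin 3 × Fin 3 satisfying L(A ⊗ B) = Φ(A) ⊗ Φ(B) for all A, B ∈ M₃(ℂ) such that L(P) is not positive semidefinite, where P ∈ M₉(ℂ) is the rank-one projector onto the vector φ = (e₀⊗e₀ + e₂⊗e₂)/√2, i.e., P has entries 1/2 at positions ((0,0),(0,0)), ((0,0),(2,2)), ((2,2),(0,0)), ((2,2),(2,2)) and 0 elsewhere. -/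

import Mathlib

open Matrix Kronecker
open scoped ComplexOrder

/-- The spin-1 angular momentum matrix J₁. -/
noncomputable def spinOneJ1 : Matrix (Fin 3) (Fin 3) ℂ :=
  ((1 / Real.sqrt 2 : ℝ) : ℂ) • !![0, 1, 0; 1, 0, 1; 0, 1, 0]

/-- The spin-1 angular momentum matrix J₂. -/
noncomputable def spinOneJ2 : Matrix (Fin 3) (Fin 3) ℂ :=
  ((1 / Real.sqrt 2 : ℝ) : ℂ) • !![0, -Complex.I, 0; Complex.I, 0, -Complex.I; 0, Complex.I, 0]

/-- The spin-1 angular momentum matrix J₃. -/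
def spinOneJ3 : Matrix (Fin 3) (Fin 3) ℂ := !![1, 0, 0; 0, 0, 0; 0, 0, -1]

/-- The spin-1 polarization-scaling map
`Φ(X) = (1/3)·tr(X)·I₃ + (1/2)·Σᵢ λᵢ·tr(X Jᵢ)·Jᵢ`. -/
noncomputable def Phi3 (l1 l2 l3 : ℝ) (X : Matrix (Fin 3) (Fin 3) ℂ) :
    Matrix (Fin 3) (Fin 3) ℂ :=
  (1 / 3 : ℂ) • X.trace • (1 : Matrix (Fin 3) (Fin 3) ℂ) +
    (1 / 2 : ℂ) • ((l1 : ℂ) • (X * spinOneJ1).trace • spinOneJ1 +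
      (l2 : ℂ) • (X * spinOneJ2).trace • spinOneJ2 +
      (l3 : ℂ) • (X * spinOneJ3).trace • spinOneJ3)

/-!
Take `λ₁ = λ₂ = λ₃ = λ`. If the rows of the `4 × 9` matrix `G` are the vectorisations of `I`,
`J₃` and the two ladder matrices, then `Gᴴ G = I ⊗ I + J₁ ⊗ J₁ - J₂ ⊗ J₂ + J₃ ⊗ J₃`; hence the
first matrix is the convex combination `(1 - 3λ²/2) I + (3λ²/2) Gᴴ G` and is positive
semidefinite when `3λ² ≤ 2`. On the other hand, `P` is half the sum of `Eₐᵦ ⊗ Eₐᵦ` over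
`a, b ∈ {0, 2}`, so the diagonal entry of `(Φ ⊗ Φ)(P)` at `e₀ ⊗ e₂` is
`(1/3 + λ₃/2)(1/3 - λ₃/2) = 1/9 - λ₃²/4`, negative when `9λ₃² > 4`. Both hold for `λ = 4/5`.
-/

section KroneckerTensorMap

variable {R l m n p l' m' n' p' : Type*} [CommSemiring R]
  [Fintype l] [Fintype m] [Fintype n] [Fintype p]
  [Fintype l'] [Fintype m'] [Fintype n'] [Fintype p']
  [DecidableEq l] [DecidableEq m] [DecidableEq n] [DecidableEq p]
  [DecidableEq l'] [DecidableEq m'] [DecidableEq n'] [DecidableEq p']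

noncomputable def kroneckerTensorMap (f : Matrix l m R →ₗ[R] Matrix l' m' R)
    (g : Matrix n p R →ₗ[R] Matrix n' p' R) :
    Matrix (l × n) (m × p) R →ₗ[R] Matrix (l' × n') (m' × p') R :=
  (kroneckerLinearEquiv l' m' n' p' R).toLinearMap ∘ₗ TensorProduct.map f g ∘ₗ
    (kroneckerLinearEquiv l m n p R).symm.toLinearMap

@[simp]
theorem kroneckerTensorMap_kronecker (f : Matrix l m R →ₗ[R] Matrix l' m' R)
    (g : Matrix n p R →ₗ[R] Matrix n' p' R) (A : Matrix l m R) (B : Matrix n p R) :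
    kroneckerTensorMap f g (A ⊗ₖ B) = f A ⊗ₖ g B := by
  simp [kroneckerTensorMap]

end KroneckerTensorMap

theorem inv_sqrt_two_smul_kronecker_inv_sqrt_two_smul {l m n p : Type*}
    (A : Matrix l m ℂ) (B : Matrix n p ℂ) :
    (((1 / Real.sqrt 2 : ℝ) : ℂ) • A) ⊗ₖ (((1 / Real.sqrt 2 : ℝ) : ℂ) • B) =
      (1 / 2 : ℂ) • (A ⊗ₖ B) := by
  rw [smul_kronecker, kronecker_smul, smul_smul, ← Complex.ofReal_mul, div_mul_div_comm,
    Real.mul_self_sqrt zero_le_two]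
  norm_num

def spinOneGramFactor : Matrix (Fin 4) (Fin 3 × Fin 3) ℂ :=
  Matrix.of fun r p =>
    ![1, spinOneJ3, !![0, 1, 0; 0, 0, 1; 0, 0, 0], !![0, 0, 0; 1, 0, 0; 0, 1, 0]] r p.1 p.2

theorem conjTranspose_spinOneGramFactor_mul_self :
    spinOneGramFactorᴴ * spinOneGramFactor =
      1 ⊗ₖ 1 + spinOneJ1 ⊗ₖ spinOneJ1 - spinOneJ2 ⊗ₖ spinOneJ2 + spinOneJ3 ⊗ₖ spinOneJ3 := by
  rw [spinOneJ1, spinOneJ2, inv_sqrt_two_smul_kronecker_inv_sqrt_two_smul,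
    inv_sqrt_two_smul_kronecker_inv_sqrt_two_smul]
  ext ⟨i, j⟩ ⟨k, l⟩
  simp only [spinOneGramFactor, mul_apply, conjTranspose_apply, of_apply, Fin.sum_univ_four,
    Matrix.add_apply, Matrix.sub_apply, Matrix.smul_apply, kroneckerMap_apply, smul_eq_mul,
    spinOneJ3, cons_val_zero, cons_val_one, cons_val_two, cons_val_three]
  fin_cases i <;> fin_cases j <;> fin_cases k <;> fin_cases l <;>
    norm_num [one_apply, Complex.ext_iff]

theorem posSemidef_one_kronecker_one_add_spinOne (l : ℝ) (hl : 3 * l ^ 2 ≤ 2) :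
    ((1 : Matrix (Fin 3) (Fin 3) ℂ) ⊗ₖ (1 : Matrix (Fin 3) (Fin 3) ℂ) +
      ((3 / 2 : ℝ) : ℂ) • (((l ^ 2 : ℝ) : ℂ) • (spinOneJ1 ⊗ₖ spinOneJ1) -
        ((l ^ 2 : ℝ) : ℂ) • (spinOneJ2 ⊗ₖ spinOneJ2) +
        ((l ^ 2 : ℝ) : ℂ) • (spinOneJ3 ⊗ₖ spinOneJ3))).PosSemidef := by
  have hconvex : (1 : Matrix (Fin 3) (Fin 3) ℂ) ⊗ₖ (1 : Matrix (Fin 3) (Fin 3) ℂ) +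
      ((3 / 2 : ℝ) : ℂ) • (((l ^ 2 : ℝ) : ℂ) • (spinOneJ1 ⊗ₖ spinOneJ1) -
        ((l ^ 2 : ℝ) : ℂ) • (spinOneJ2 ⊗ₖ spinOneJ2) +
        ((l ^ 2 : ℝ) : ℂ) • (spinOneJ3 ⊗ₖ spinOneJ3)) =
      (1 - 3 / 2 * l ^ 2) • (1 : Matrix (Fin 3 × Fin 3) (Fin 3 × Fin 3) ℂ) +
        (3 / 2 * l ^ 2) • (spinOneGramFactorᴴ * spinOneGramFactor) := by
    rw [conjTranspose_spinOneGramFactor_mul_self, one_kronecker_one]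
    simp only [Complex.coe_smul]
    module
  rw [hconvex]
  exact (PosSemidef.one.smul (by linarith)).add
    ((posSemidef_conjTranspose_mul_self _).smul (by positivity))

noncomputable def phi3LinearMap (l1 l2 l3 : ℝ) :
    Matrix (Fin 3) (Fin 3) ℂ →ₗ[ℂ] Matrix (Fin 3) (Fin 3) ℂ where
  toFun := Phi3 l1 l2 l3
  map_add' X Y := by
    simp only [Phi3, Matrix.add_mul, trace_add, add_smul, smul_add]
    abel
  map_smul' c X := by
    simp only [Phi3, Matrix.smul_mul, trace_smul, smul_smul, smul_add, RingHom.id_apply,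
      smul_eq_mul]
    module

theorem phi3LinearMap_apply (l1 l2 l3 : ℝ) (X : Matrix (Fin 3) (Fin 3) ℂ) :
    phi3LinearMap l1 l2 l3 X = Phi3 l1 l2 l3 X := rfl

theorem Phi3_single_apply (l1 l2 l3 : ℝ) (a b x y : Fin 3) :
    Phi3 l1 l2 l3 (single a b 1) x y =
      (single a b 1 : Matrix (Fin 3) (Fin 3) ℂ).trace / 3 * (1 : Matrix (Fin 3) (Fin 3) ℂ) x y +
        (l1 * spinOneJ1 b a * spinOneJ1 x y + l2 * spinOneJ2 b a * spinOneJ2 x y +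
          l3 * spinOneJ3 b a * spinOneJ3 x y) / 2 := by
  simp only [Phi3, trace_single_mul, Matrix.add_apply, Matrix.smul_apply, smul_eq_mul, one_mul]
  ring

noncomputable def bellProjector : Matrix (Fin 3 × Fin 3) (Fin 3 × Fin 3) ℂ :=
  Matrix.of fun p q : Fin 3 × Fin 3 =>
    if (p = (0, 0) ∨ p = (2, 2)) ∧ (q = (0, 0) ∨ q = (2, 2)) then (1 / 2 : ℂ) else 0

theorem bellProjector_eq_sum :
    bellProjector = (1 / 2 : ℂ) • ∑ a ∈ ({0, 2} : Finset (Fin 3)), ∑ b ∈ ({0, 2} : Finset (Fin 3)),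
      single a b 1 ⊗ₖ single a b 1 := by
  ext ⟨i, j⟩ ⟨k, l⟩
  simp only [bellProjector, of_apply, Matrix.smul_apply,
    Finset.sum_pair (show (0 : Fin 3) ≠ 2 by decide)]
  fin_cases i <;> fin_cases j <;> fin_cases k <;> fin_cases l <;> simp

theorem kroneckerTensorMap_self_bellProjector_apply
    (f : Matrix (Fin 3) (Fin 3) ℂ →ₗ[ℂ] Matrix (Fin 3) (Fin 3) ℂ) (i j k l : Fin 3) :
    kroneckerTensorMap f f bellProjector (i, j) (k, l) =
      (∑ a ∈ ({0, 2} : Finset (Fin 3)), ∑ b ∈ ({0, 2} : Finset (Fin 3)),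
        f (single a b 1) i k * f (single a b 1) j l) / 2 := by
  simp [bellProjector_eq_sum]
  ring

theorem kroneckerTensorMap_phi3LinearMap_bellProjector_apply (l1 l2 l3 : ℝ) :
    kroneckerTensorMap (phi3LinearMap l1 l2 l3) (phi3LinearMap l1 l2 l3) bellProjector
      (0, 2) (0, 2) = ((1 / 9 - l3 ^ 2 / 4 : ℝ) : ℂ) := by
  simp only [kroneckerTensorMap_self_bellProjector_apply, phi3LinearMap_apply, Phi3_single_apply,
    Finset.sum_pair (show (0 : Fin 3) ≠ 2 by decide)]
  simp [spinOneJ1, spinOneJ2, spinOneJ3, one_apply]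
  ring

theorem not_posSemidef_kroneckerTensorMap_phi3LinearMap_bellProjector (l1 l2 l3 : ℝ)
    (hl3 : 4 < 9 * l3 ^ 2) :
    ¬ (kroneckerTensorMap (phi3LinearMap l1 l2 l3) (phi3LinearMap l1 l2 l3)
      bellProjector).PosSemidef := fun hpsd => by
  have hdiag := hpsd.diag_nonneg (i := (0, 2))
  rw [kroneckerTensorMap_phi3LinearMap_bellProjector_apply, Complex.zero_le_real] at hdiag
  linarith

theorem exists_square_cp_but_not_two_tensor_stable_positive :
    ∃ l1 l2 l3 : ℝ,
      ((1 : Matrix (Fin 3) (Fin 3) ℂ) ⊗ₖ (1 : Matrix (Fin 3) (Fin 3) ℂ) +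
        ((3 / 2 : ℝ) : ℂ) • (((l1 ^ 2 : ℝ) : ℂ) • (spinOneJ1 ⊗ₖ spinOneJ1) -
          ((l2 ^ 2 : ℝ) : ℂ) • (spinOneJ2 ⊗ₖ spinOneJ2) +
          ((l3 ^ 2 : ℝ) : ℂ) • (spinOneJ3 ⊗ₖ spinOneJ3))).PosSemidef ∧
      ∃ L : Matrix (Fin 3 × Fin 3) (Fin 3 × Fin 3) ℂ →ₗ[ℂ]
            Matrix (Fin 3 × Fin 3) (Fin 3 × Fin 3) ℂ,
        (∀ A B : Matrix (Fin 3) (Fin 3) ℂ, L (A ⊗ₖ B) = Phi3 l1 l2 l3 A ⊗ₖ Phi3 l1 l2 l3 B) ∧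
        ¬ (L (Matrix.of fun p q : Fin 3 × Fin 3 =>
            if (p = (0, 0) ∨ p = (2, 2)) ∧ (q = (0, 0) ∨ q = (2, 2)) then (1 / 2 : ℂ)
            else 0)).PosSemidef := by
  refine ⟨4 / 5, 4 / 5, 4 / 5, posSemidef_one_kronecker_one_add_spinOne _ (by norm_num),
    kroneckerTensorMap (phi3LinearMap _ _ _) (phi3LinearMap _ _ _),
    fun A B => kroneckerTensorMap_kronecker _ _ A B,
    not_posSemidef_kroneckerTensorMap_phi3LinearMap_bellProjector _ _ _ (by norm_num)⟩
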